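/- arXiv:1912.04650 — 2 statements merged into one kernel-verified Lean document; each statement's English description precedes it below -/
import Mathlib

section
/- Let φ : G → Z be a surjective group homomorphism with kernel K, and let X be a free G-set. Choose any set-theoretic section of φ. Then the map g ⊗ x ↦ (g·x) ⊗ t^{φ(g)} defines an isomorphism of ZG-modules ZG ⊗_{ZK} Z[X] ≅ Z[X] ⊗_Z φ*Z[t,t^{-1}], where φ*Z[t,t^{-1}] is Z[t,t^{-1}] with G acting by g·t^n = t^{n+φ(g)} and G acts diagonally on the right-hand side. -/
open scoped TensorProduct

/-- Let `φ : G → ℤ` be a surjective group homomorphism with kernel `K`, and let `X` be a free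
`G`-set. The induced module `ℤG ⊗_{ℤK} ℤ[X]` (realised as the quotient of `ℤG ⊗_ℤ ℤ[X]` by
the relations `g·k ⊗ x − g ⊗ k·x` for `k ∈ K`) is isomorphic, via `g ⊗ x ↦ (g·x) ⊗ t^{φ(g)}`,
to `ℤ[X] ⊗_ℤ φ*ℤ[t,t⁻¹]`, where `φ*ℤ[t,t⁻¹]` is the Laurent polynomial ring
`ℤ[t,t⁻¹] = AddMonoidAlgebra ℤ ℤ` on which `g` acts by multiplication by `t^{φ(g)}` and `G`
acts diagonally on the tensor product. -/
theorem induced_module_iso_laurent_twist {G X : Type*} [Group G]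
    (φ : G →* Multiplicative ℤ) (hφ : Function.Surjective φ)
    [MulAction G X] (hfree : ∀ (g : G) (x : X), g • x = x → g = 1)
    (S : Submodule ℤ (MonoidAlgebra ℤ G ⊗[ℤ] (X →₀ ℤ)))
    (hS : S = Submodule.span ℤ
      {a : MonoidAlgebra ℤ G ⊗[ℤ] (X →₀ ℤ) |
        ∃ (g : G) (k : φ.ker) (x : X),
          a = (MonoidAlgebra.of ℤ G (g * (k : G))) ⊗ₜ[ℤ] Finsupp.single x (1 : ℤ) -
              (MonoidAlgebra.of ℤ G g) ⊗ₜ[ℤ] Finsupp.single ((k : G) • x) (1 : ℤ)}) :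
    ∃ e : ((MonoidAlgebra ℤ G ⊗[ℤ] (X →₀ ℤ)) ⧸ S) ≃ₗ[ℤ]
        ((X →₀ ℤ) ⊗[ℤ] AddMonoidAlgebra ℤ ℤ),
      ∀ (g : G) (x : X),
        e (Submodule.Quotient.mk
            ((MonoidAlgebra.of ℤ G g) ⊗ₜ[ℤ] Finsupp.single x (1 : ℤ))) =
          Finsupp.single (g • x) (1 : ℤ) ⊗ₜ[ℤ]
            AddMonoidAlgebra.single (Multiplicative.toAdd (φ g)) (1 : ℤ) := by
  classical
  choose s hs using hφ
  let F : MonoidAlgebra ℤ G ⊗[ℤ] (X →₀ ℤ) →ₗ[ℤ] (X →₀ ℤ) ⊗[ℤ] AddMonoidAlgebra ℤ ℤ :=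
    TensorProduct.lift (((Finsupp.lsum ℤ) fun g : G =>
      LinearMap.toSpanSingleton ℤ _ ((Finsupp.lsum ℤ) fun x : X =>
        LinearMap.toSpanSingleton ℤ _
          (Finsupp.single (g • x) (1 : ℤ) ⊗ₜ[ℤ]
            AddMonoidAlgebra.single (Multiplicative.toAdd (φ g)) (1 : ℤ)))) ∘ₗ
        (MonoidAlgebra.coeffLinearEquiv ℤ).toLinearMap)
  have hF : ∀ (g : G) (x : X),
      F ((MonoidAlgebra.of ℤ G g) ⊗ₜ[ℤ] Finsupp.single x (1 : ℤ)) =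
        Finsupp.single (g • x) (1 : ℤ) ⊗ₜ[ℤ]
          AddMonoidAlgebra.single (Multiplicative.toAdd (φ g)) (1 : ℤ) := by
    intro g x
    show TensorProduct.lift _ _ = _
    rw [TensorProduct.lift.tmul, MonoidAlgebra.of_apply, LinearMap.comp_apply]
    erw [Finsupp.lsum_single, LinearMap.toSpanSingleton_apply_one]
    erw [Finsupp.lsum_single, LinearMap.toSpanSingleton_apply_one]
  have hker : S ≤ LinearMap.ker F := by
    rw [hS, Submodule.span_le]
    rintro a ⟨g, k, x, rfl⟩
    have hk : φ (k : G) = 1 := k.2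
    have h1 : φ (g * (k : G)) = φ g := by rw [map_mul, hk, mul_one]
    simp only [SetLike.mem_coe, LinearMap.mem_ker, map_sub, hF, h1, mul_smul]
    exact sub_self _
  let F' := S.liftQ F hker
  let B : (X →₀ ℤ) ⊗[ℤ] AddMonoidAlgebra ℤ ℤ →ₗ[ℤ] (MonoidAlgebra ℤ G ⊗[ℤ] (X →₀ ℤ)) ⧸ S :=
    TensorProduct.lift ((Finsupp.lsum ℤ) fun x : X =>
      LinearMap.toSpanSingleton ℤ _ (((Finsupp.lsum ℤ) fun n : ℤ =>
        LinearMap.toSpanSingleton ℤ _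
          (Submodule.Quotient.mk
            ((MonoidAlgebra.of ℤ G (s (Multiplicative.ofAdd n))) ⊗ₜ[ℤ]
              Finsupp.single ((s (Multiplicative.ofAdd n))⁻¹ • x) (1 : ℤ)))) ∘ₗ
          (AddMonoidAlgebra.coeffLinearEquiv ℤ).toLinearMap))
  have hB : ∀ (x : X) (n : ℤ),
      B (Finsupp.single x (1 : ℤ) ⊗ₜ[ℤ] AddMonoidAlgebra.single n (1 : ℤ)) =
        Submodule.Quotient.mk
          ((MonoidAlgebra.of ℤ G (s (Multiplicative.ofAdd n))) ⊗ₜ[ℤ]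
            Finsupp.single ((s (Multiplicative.ofAdd n))⁻¹ • x) (1 : ℤ)) := by
    intro x n
    show TensorProduct.lift _ _ = _
    rw [TensorProduct.lift.tmul]
    erw [Finsupp.lsum_single, LinearMap.toSpanSingleton_apply_one]
    rw [LinearMap.comp_apply]
    erw [Finsupp.lsum_single, LinearMap.toSpanSingleton_apply_one]
  have key : ∀ (g : G) (x : X),
      (Submodule.Quotient.mk
        ((MonoidAlgebra.of ℤ G (s (φ g))) ⊗ₜ[ℤ]
          Finsupp.single ((s (φ g))⁻¹ • (g • x)) (1 : ℤ)) :
        (MonoidAlgebra ℤ G ⊗[ℤ] (X →₀ ℤ)) ⧸ S) =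
      Submodule.Quotient.mk ((MonoidAlgebra.of ℤ G g) ⊗ₜ[ℤ] Finsupp.single x (1 : ℤ)) := by
    intro g x
    rw [Submodule.Quotient.eq, hS]
    have hkmem : (s (φ g))⁻¹ * g ∈ φ.ker := by
      rw [MonoidHom.mem_ker, map_mul, map_inv, hs, inv_mul_cancel]
    rw [← neg_sub]
    refine Submodule.neg_mem _ (Submodule.subset_span ?_)
    refine ⟨s (φ g), ⟨(s (φ g))⁻¹ * g, hkmem⟩, x, ?_⟩
    rw [mul_inv_cancel_left, mul_smul]
  have h1 : F' ∘ₗ B = LinearMap.id := by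
    ext x n
    show F' (B (Finsupp.single x 1 ⊗ₜ[ℤ] AddMonoidAlgebra.single n (1 : ℤ))) = _
    rw [hB x n, Submodule.liftQ_apply, hF, smul_inv_smul, hs]
    rfl
  have h2 : B ∘ₗ F' = LinearMap.id := by
    apply Submodule.linearMap_qext
    ext g x
    show B (F' (Submodule.Quotient.mk ((MonoidAlgebra.of ℤ G g) ⊗ₜ[ℤ] Finsupp.single x 1))) = _
    rw [Submodule.liftQ_apply, hF]
    have : AddMonoidAlgebra.single (Multiplicative.toAdd (φ g)) (1 : ℤ) =
        AddMonoidAlgebra.single (Multiplicative.toAdd (φ g)) (1 : ℤ) := rfl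
    rw [hB]
    have hsg : Multiplicative.ofAdd (Multiplicative.toAdd (φ g)) = φ g := rfl
    rw [hsg]
    exact key g x
  refine ⟨LinearEquiv.ofLinear F' B h1 h2, ?_⟩
  intro g x
  show F' (Submodule.Quotient.mk _) = _
  rw [Submodule.liftQ_apply]
  exact hF g x
end

section
/- Let D be a skew field and M = A + tB where A and B are l × m matrices over D, viewed as a matrix over the twisted Laurent polynomial ring D[t,t^{-1}]. Then the D-dimension of the torsion submodule of the cokernel of right multiplication by M on free modules, r_M : D[t,t^{-1}]^l → D[t,t^{-1}]^m, is at most the rank of B over D. -/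
set_option maxHeartbeats 2000000 in
/-- (Harvey's proposition, agrarian form.) Let `D` be a skew field and `R = D[t,t⁻¹]` a
twisted Laurent polynomial ring over `D` (so `R` contains `D` via `ι`, has an invertible
element `t` with `t·ι(d) = ι(α d)·t` for an automorphism `α` of `D`, and is free as a left
`D`-vector space with basis `(tⁿ)_{n∈ℤ}`). Let `M = A + tB` for `l × m` matrices `A, B` over
`D`, and let `f = r_M : Rˡ → Rᵐ` be right multiplication by `M`. Then the torsion submodule
of `coker(r_M)` has `D`-dimension at most the rank of `B` over `D` (the dimension of the row
space of `B`). -/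
theorem dim_torsion_coker_le_rank {D R : Type*} [DivisionRing D] [Ring R]
    (ι : D →+* R) (t : Rˣ) (α : D ≃+* D)
    (htw : ∀ d : D, (t : R) * ι d = ι (α d) * (t : R))
    (b : @Module.Basis ℤ D R _ _ (Module.compHom R ι))
    (hb : ∀ n : ℤ, b n = ((t ^ n : Rˣ) : R))
    {l m : ℕ} (A B : Matrix (Fin l) (Fin m) D)
    (f : (Fin l → R) →ₗ[R] (Fin m → R))
    (hf : ∀ (x : Fin l → R) (j : Fin m),
      f x j = ∑ i, x i * (ι (A i j) + (t : R) * ι (B i j))) :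
    letI : Module D ((Fin m → R) ⧸ LinearMap.range f) :=
      Module.compHom ((Fin m → R) ⧸ LinearMap.range f) ι
    ∀ T : Submodule D ((Fin m → R) ⧸ LinearMap.range f),
      (T : Set ((Fin m → R) ⧸ LinearMap.range f)) =
        {x | ∃ r : R, r ≠ 0 ∧ r • x = 0} →
      Module.finrank D T ≤
        Module.finrank D (Submodule.span D (Set.range fun i : Fin l => B i)) := by
  classical
  letI : Module D R := Module.compHom R ι
  letI instN : Module D ((Fin m → R) ⧸ LinearMap.range f) :=
      Module.compHom ((Fin m → R) ⧸ LinearMap.range f) ι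
  intro T hT
  set N := (Fin m → R) ⧸ LinearMap.range f with hN
  have hsm : ∀ (d : D) (r : R), d • r = ι d * r := fun _ _ => rfl
  have hsmN : ∀ (d : D) (x : N), d • x = ι d • x := fun _ _ => rfl
  have hsmP : ∀ (d : D) (x : Fin m → R), d • x = (ι d) • x := fun _ _ => rfl
  -- twisted commutation for powers of t
  have hinv : ∀ d : D, ((t⁻¹ : Rˣ) : R) * ι d = ι (α.symm d) * ((t⁻¹ : Rˣ) : R) := by
    intro d
    have h1 : (t : R) * ι (α.symm d) = ι d * (t : R) := by
      rw [htw (α.symm d), α.apply_symm_apply]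
    refine (Units.mul_right_inj t).mp ?_
    rw [← mul_assoc, Units.mul_inv, one_mul, ← mul_assoc, h1, mul_assoc,
      Units.mul_inv, mul_one]
  have htp : ∀ (k : ℤ) (d : D),
      ((t ^ k : Rˣ) : R) * ι d = ι ((α ^ k) d) * ((t ^ k : Rˣ) : R) := by
    intro k
    induction k using Int.induction_on with
    | zero =>
      intro d
      simp only [zpow_zero, Units.val_one, one_mul, mul_one]
      rfl
    | succ n ih =>
      intro d
      have e1 : (t ^ ((n : ℤ) + 1) : Rˣ) = t ^ (n : ℤ) * t := by
        rw [zpow_add_one]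
      have e2 : (α ^ ((n : ℤ) + 1)) d = (α ^ (n : ℤ)) (α d) := by
        rw [zpow_add_one]; rfl
      rw [e1, e2, Units.val_mul, mul_assoc, htw d, ← mul_assoc, ih (α d), mul_assoc]
    | pred n ih =>
      intro d
      have e1 : (t ^ (-(n : ℤ) - 1) : Rˣ) = t ^ (-(n : ℤ)) * t⁻¹ := by
        rw [zpow_sub_one]
      have e2 : (α ^ (-(n : ℤ) - 1)) d = (α ^ (-(n : ℤ))) (α.symm d) := by
        rw [zpow_sub_one]
        rfl
      rw [e1, e2, Units.val_mul, mul_assoc, hinv d, ← mul_assoc, ih (α.symm d), mul_assoc]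
  -- basis monomial facts
  have hb0 : b 0 = 1 := by rw [hb]; simp
  have hbb : ∀ k j : ℤ, ((t ^ k : Rˣ) : R) * b j = b (k + j) := by
    intro k j
    rw [hb, hb, ← Units.val_mul, ← zpow_add]
  have hbt : ∀ k : ℤ, b k * (t : R) = b (k + 1) := by
    intro k
    rw [hb, hb, zpow_add_one, Units.val_mul]
  have hbc : ∀ (k : ℤ) (a : D), b k * ι a = ((α ^ k) a) • b k := by
    intro k a
    rw [hsm, hb]
    exact htp k a
  -- degree truncation subspaces
  set Rle : ℤ → Submodule D R := fun n => Submodule.span D (b '' {j : ℤ | j ≤ n}) with hRle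
  set Rge : ℤ → Submodule D R := fun n => Submodule.span D (b '' {j : ℤ | n ≤ j}) with hRge
  have hRleMono : ∀ {n n' : ℤ}, n ≤ n' → Rle n ≤ Rle n' := by
    intro n n' h
    exact Submodule.span_mono (Set.image_mono fun j hj => le_trans hj h)
  have hRgeMono : ∀ {n n' : ℤ}, n' ≤ n → Rge n ≤ Rge n' := by
    intro n n' h
    exact Submodule.span_mono (Set.image_mono fun j hj => le_trans h hj)
  have hbmemle : ∀ {j n : ℤ}, j ≤ n → b j ∈ Rle n := fun {j n} h =>
    Submodule.subset_span ⟨j, h, rfl⟩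
  have hbmemge : ∀ {j n : ℤ}, n ≤ j → b j ∈ Rge n := fun {j n} h =>
    Submodule.subset_span ⟨j, h, rfl⟩
  -- generic span closure under right multiplication
  have hspan_mul : ∀ (s : Set R) (c : R) (Q : Submodule D R),
      (∀ x ∈ s, x * c ∈ Q) → ∀ x ∈ Submodule.span D s, x * c ∈ Q := by
    intro s c Q hgen x hx
    induction hx using Submodule.span_induction with
    | mem x hx => exact hgen x hx
    | zero => simpa using Q.zero_mem
    | add x y _ _ ihx ihy => rw [add_mul]; exact Q.add_mem ihx ihy
    | smul d x _ ih =>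
      rw [hsm, mul_assoc, ← hsm]
      exact Q.smul_mem d ih
  have htk_span : ∀ (k : ℤ) (s : Set R) (Q : Submodule D R),
      (∀ x ∈ s, ((t ^ k : Rˣ) : R) * x ∈ Q) → ∀ x ∈ Submodule.span D s,
        ((t ^ k : Rˣ) : R) * x ∈ Q := by
    intro k s Q hgen x hx
    induction hx using Submodule.span_induction with
    | mem x hx => exact hgen x hx
    | zero => simpa using Q.zero_mem
    | add x y _ _ ihx ihy => rw [mul_add]; exact Q.add_mem ihx ihy
    | smul d x _ ih =>
      rw [hsm, ← mul_assoc, htp k d, mul_assoc, ← hsm]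
      exact Q.smul_mem _ ih
  -- closure properties
  have hRle_const : ∀ (n : ℤ) (a : D) {x : R}, x ∈ Rle n → x * ι a ∈ Rle n := by
    intro n a x hx
    refine hspan_mul _ _ _ ?_ x hx
    rintro y ⟨j, hj, rfl⟩
    rw [hbc]
    exact (Rle n).smul_mem _ (hbmemle hj)
  have hRge_const : ∀ (n : ℤ) (a : D) {x : R}, x ∈ Rge n → x * ι a ∈ Rge n := by
    intro n a x hx
    refine hspan_mul _ _ _ ?_ x hx
    rintro y ⟨j, hj, rfl⟩
    rw [hbc]
    exact (Rge n).smul_mem _ (hbmemge hj)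
  have hRle_t : ∀ (n : ℤ) {x : R}, x ∈ Rle n → x * (t : R) ∈ Rle (n + 1) := by
    intro n x hx
    refine hspan_mul _ _ _ ?_ x hx
    rintro y ⟨j, hj, rfl⟩
    rw [hbt]
    simp only [Set.mem_setOf_eq] at hj
    exact hbmemle (by omega)
  have hRge_t : ∀ (n : ℤ) {x : R}, x ∈ Rge n → x * (t : R) ∈ Rge (n + 1) := by
    intro n x hx
    refine hspan_mul _ _ _ ?_ x hx
    rintro y ⟨j, hj, rfl⟩
    rw [hbt]
    simp only [Set.mem_setOf_eq] at hj
    exact hbmemge (by omega)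
  have hRle_tk : ∀ (k n : ℤ) {x : R}, x ∈ Rle n → ((t ^ k : Rˣ) : R) * x ∈ Rle (n + k) := by
    intro k n x hx
    refine htk_span k _ _ ?_ x hx
    rintro y ⟨j, hj, rfl⟩
    rw [hbb]
    simp only [Set.mem_setOf_eq] at hj
    exact hbmemle (by omega)
  have hRge_tk : ∀ (k n : ℤ) {x : R}, x ∈ Rge n → ((t ^ k : Rˣ) : R) * x ∈ Rge (n + k) := by
    intro k n x hx
    refine htk_span k _ _ ?_ x hx
    rintro y ⟨j, hj, rfl⟩
    rw [hbb]
    simp only [Set.mem_setOf_eq] at hj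
    exact hbmemge (by omega)
  -- row multiplication
  have hRge_row : ∀ (aa bb : D) {x : R}, x ∈ Rge 1 →
      x * (ι aa + (t : R) * ι bb) ∈ Rge 1 := by
    intro aa bb x hx
    rw [mul_add, ← mul_assoc]
    exact (Rge 1).add_mem (hRge_const 1 aa hx)
      (hRgeMono (by omega) (hRge_const 2 bb (hRge_t 1 hx)))
  have hRle_row : ∀ (aa bb : D) {x : R}, x ∈ Rle (-1) →
      x * (ι aa + (t : R) * ι bb) ∈ Rle 0 := by
    intro aa bb x hx
    rw [mul_add, ← mul_assoc]
    exact (Rle 0).add_mem (hRleMono (by omega) (hRle_const _ aa hx))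
      (hRle_const _ bb (by simpa using hRle_t (-1) hx))
  -- exhaustion of R by the filtration
  have hex_le : ∀ r : R, ∃ n : ℤ, r ∈ Rle n := by
    intro r
    refine ⟨(((b.repr r).support.sup fun j => j.toNat : ℕ) : ℤ), b.mem_span_image.mpr ?_⟩
    intro j hj
    have h2 : j.toNat ≤ (b.repr r).support.sup (fun j => j.toNat) :=
      Finset.le_sup (Finset.mem_coe.mp hj)
    simp only [Set.mem_setOf_eq]
    exact le_trans (Int.self_le_toNat j) (by exact_mod_cast h2)
  have hex_ge : ∀ r : R, ∃ n : ℤ, r ∈ Rge n := by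
    intro r
    refine ⟨-(((b.repr r).support.sup fun j => (-j).toNat : ℕ) : ℤ), b.mem_span_image.mpr ?_⟩
    intro j hj
    have h2 : (-j).toNat ≤ (b.repr r).support.sup (fun j => (-j).toNat) :=
      Finset.le_sup (f := fun j => (-j).toNat) (Finset.mem_coe.mp hj)
    have h3 : -j ≤ (((b.repr r).support.sup fun j => (-j).toNat : ℕ) : ℤ) :=
      le_trans (Int.self_le_toNat (-j)) (by exact_mod_cast h2)
    simp only [Set.mem_setOf_eq]
    omega
  -- vector-level filtration
  set Fsub : ℤ → Submodule D (Fin m → R) :=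
    fun n => Submodule.pi Set.univ (fun _ => Rle n) with hFsubdef
  set Gsub : ℤ → Submodule D (Fin m → R) :=
    fun n => Submodule.pi Set.univ (fun _ => Rge n) with hGsubdef
  have hFmem : ∀ (n : ℤ) (x : Fin m → R), x ∈ Fsub n ↔ ∀ j, x j ∈ Rle n := by
    intro n x
    rw [hFsubdef]
    constructor
    · intro h j; exact h j (Set.mem_univ j)
    · intro h j _; exact h j
  have hGmem : ∀ (n : ℤ) (x : Fin m → R), x ∈ Gsub n ↔ ∀ j, x j ∈ Rge n := by
    intro n x
    rw [hGsubdef]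
    constructor
    · intro h j; exact h j (Set.mem_univ j)
    · intro h j _; exact h j
  have hexF : ∀ x : Fin m → R, ∃ n : ℤ, x ∈ Fsub n := by
    intro x
    choose g hg using fun j => hex_le (x j)
    refine ⟨((Finset.univ.sup fun j => (g j).toNat : ℕ) : ℤ), (hFmem _ _).mpr ?_⟩
    intro j
    refine hRleMono ?_ (hg j)
    have h2 : (g j).toNat ≤ Finset.univ.sup fun j => (g j).toNat :=
      Finset.le_sup (f := fun j => (g j).toNat) (Finset.mem_univ j)
    exact le_trans (Int.self_le_toNat _) (by exact_mod_cast h2)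
  have hexG : ∀ x : Fin m → R, ∃ n : ℤ, x ∈ Gsub n := by
    intro x
    choose g hg using fun j => hex_ge (x j)
    refine ⟨-((Finset.univ.sup fun j => (-(g j)).toNat : ℕ) : ℤ), (hGmem _ _).mpr ?_⟩
    intro j
    refine hRgeMono ?_ (hg j)
    have h2 : (-(g j)).toNat ≤ Finset.univ.sup fun j => (-(g j)).toNat :=
      Finset.le_sup (f := fun j => (-(g j)).toNat) (Finset.mem_univ j)
    have h3 : -(g j) ≤ ((Finset.univ.sup fun j => (-(g j)).toNat : ℕ) : ℤ) :=
      le_trans (Int.self_le_toNat _) (by exact_mod_cast h2)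
    omega
  have hFsubMono : ∀ {n n' : ℤ}, n ≤ n' → Fsub n ≤ Fsub n' := by
    intro n n' h x hx
    exact (hFmem _ _).mpr fun j => hRleMono h ((hFmem _ _).mp hx j)
  have hGsubMono : ∀ {n n' : ℤ}, n' ≤ n → Gsub n ≤ Gsub n' := by
    intro n n' h x hx
    exact (hGmem _ _).mpr fun j => hRgeMono h ((hGmem _ _).mp hx j)
  -- the quotient map as a D-linear map
  set π : (Fin m → R) →ₗ[D] N :=
    { toFun := fun x => Submodule.Quotient.mk x
      map_add' := fun x y => rfl
      map_smul' := fun d x => by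
        show Submodule.Quotient.mk (d • x) = d • Submodule.Quotient.mk x
        rw [hsmP, hsmN]
        exact Submodule.Quotient.mk_smul _ (ι d) x } with hπdef
  have hπRsmul : ∀ (r : R) (x : Fin m → R), π (r • x) = r • π x := by
    intro r x
    exact Submodule.Quotient.mk_smul _ r x
  have hπsurj : ∀ z : N, ∃ x : Fin m → R, π x = z := by
    intro z
    obtain ⟨x, hx⟩ := Submodule.Quotient.mk_surjective _ z
    exact ⟨x, hx⟩
  have hπf : ∀ u : Fin l → R, π (f u) = 0 := fun u =>
    (Submodule.Quotient.mk_eq_zero _).mpr ⟨u, rfl⟩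
  have hπeq : ∀ x y : Fin m → R, π x = π y → ∃ u : Fin l → R, f u = x - y := by
    intro x y h
    exact (Submodule.Quotient.eq _).mp h
  -- every element of N comes from some level of the filtration
  have hmemF : ∀ z : N, ∃ n : ℤ, z ∈ Submodule.map π (Fsub n) := by
    intro z
    obtain ⟨x, hx⟩ := hπsurj z
    obtain ⟨n, hn⟩ := hexF x
    exact ⟨n, ⟨x, hn, hx⟩⟩
  have hmemG : ∀ z : N, ∃ n : ℤ, z ∈ Submodule.map π (Gsub n) := by
    intro z
    obtain ⟨x, hx⟩ := hπsurj z
    obtain ⟨n, hn⟩ := hexG x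
    exact ⟨n, ⟨x, hn, hx⟩⟩
  -- shifting by powers of t
  have hshiftF : ∀ (k n : ℤ) (z : N), z ∈ Submodule.map π (Fsub n) →
      ((t ^ k : Rˣ) : R) • z ∈ Submodule.map π (Fsub (n + k)) := by
    rintro k n z ⟨u, hu, rfl⟩
    refine ⟨((t ^ k : Rˣ) : R) • u, ?_, hπRsmul _ u⟩
    refine (hFmem _ _).mpr fun j => ?_
    exact hRle_tk k n ((hFmem _ _).mp hu j)
  have hshiftG : ∀ (k n : ℤ) (z : N), z ∈ Submodule.map π (Gsub n) →
      ((t ^ k : Rˣ) : R) • z ∈ Submodule.map π (Gsub (n + k)) := by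
    rintro k n z ⟨u, hu, rfl⟩
    refine ⟨((t ^ k : Rˣ) : R) • u, ?_, hπRsmul _ u⟩
    refine (hGmem _ _).mpr fun j => ?_
    exact hRge_tk k n ((hGmem _ _).mp hu j)
  -- torsion elements are stable under multiplication by powers of t
  have htors : ∀ z : N, z ∈ T → ∀ k : ℤ, ((t ^ k : Rˣ) : R) • z ∈ T := by
    intro z hz k
    have h1 : z ∈ (T : Set N) := hz
    rw [hT] at h1
    obtain ⟨p, hp0, hp⟩ := h1
    have h2 : ((t ^ k : Rˣ) : R) • z ∈ (T : Set N) := by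
      rw [hT]
      refine ⟨p * (((t ^ k : Rˣ)⁻¹ : Rˣ) : R), ?_, ?_⟩
      · intro h0
        apply hp0
        have : p * ((((t ^ k : Rˣ)⁻¹ : Rˣ)) : R) * ((t ^ k : Rˣ) : R) = 0 := by
          rw [h0, zero_mul]
        rwa [mul_assoc, Units.inv_mul, mul_one] at this
      · rw [smul_smul, mul_assoc, Units.inv_mul, mul_one]
        exact hp
    exact h2
  -- the row space of B
  set VB : Submodule D (Fin m → D) := Submodule.span D (Set.range fun i : Fin l => B i)
    with hVB
  by_cases hfd : FiniteDimensional D ↥T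
  swap
  · rw [Module.finrank_of_infinite_dimensional hfd]
    exact Nat.zero_le _
  -- a uniform filtration level for T
  obtain ⟨sT, hsT⟩ : T.FG := (Submodule.fg_top T).mp hfd.fg_top
  have hfinsF : ∀ s : Finset N, ∃ n : ℤ, ∀ z ∈ s, z ∈ Submodule.map π (Fsub n) := by
    intro s
    induction s using Finset.induction_on with
    | empty => exact ⟨0, fun z hz => absurd hz (Finset.notMem_empty z)⟩
    | @insert a s ha ih =>
      obtain ⟨n₁, h₁⟩ := ih
      obtain ⟨n₂, h₂⟩ := hmemF a
      refine ⟨max n₁ n₂, fun z hz => ?_⟩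
      rcases Finset.mem_insert.mp hz with hz | hz
      · subst hz
        exact Submodule.map_mono (hFsubMono (le_max_right n₁ n₂)) h₂
      · exact Submodule.map_mono (hFsubMono (le_max_left n₁ n₂)) (h₁ z hz)
  have hfinsG : ∀ s : Finset N, ∃ n : ℤ, ∀ z ∈ s, z ∈ Submodule.map π (Gsub n) := by
    intro s
    induction s using Finset.induction_on with
    | empty => exact ⟨0, fun z hz => absurd hz (Finset.notMem_empty z)⟩
    | @insert a s ha ih =>
      obtain ⟨n₁, h₁⟩ := ih
      obtain ⟨n₂, h₂⟩ := hmemG a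
      refine ⟨min n₁ n₂, fun z hz => ?_⟩
      rcases Finset.mem_insert.mp hz with hz | hz
      · subst hz
        exact Submodule.map_mono (hGsubMono (min_le_right n₁ n₂)) h₂
      · exact Submodule.map_mono (hGsubMono (min_le_left n₁ n₂)) (h₁ z hz)
  obtain ⟨n₁, hn₁⟩ := hfinsF sT
  obtain ⟨k₀, hk₀⟩ := hfinsG sT
  have hTleF : T ≤ Submodule.map π (Fsub n₁) := by
    rw [← hsT]
    exact Submodule.span_le.mpr fun z hz => hn₁ z (Finset.mem_coe.mp hz)
  have hTleG : T ≤ Submodule.map π (Gsub k₀) := by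
    rw [← hsT]
    exact Submodule.span_le.mpr fun z hz => hk₀ z (Finset.mem_coe.mp hz)
  -- every torsion class has a representative in degrees ≤ 0, and one in degrees ≥ 1
  have hcollapse : ∀ (k : ℤ) (z : N), ((t ^ (-k) : Rˣ) : R) • ((t ^ k : Rˣ) : R) • z = z := by
    intro k z
    rw [smul_smul, ← Units.val_mul, ← zpow_add]
    norm_num
  have hrepF : ∀ z : N, z ∈ T → ∃ x, x ∈ Fsub 0 ∧ π x = z := by
    intro z hz
    have h1 := hTleF (htors z hz n₁)
    have h2 := hshiftF (-n₁) n₁ _ h1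
    rw [hcollapse] at h2
    have h4 : n₁ + -n₁ = 0 := by omega
    rw [h4] at h2
    obtain ⟨x, hx, hxe⟩ := h2
    exact ⟨x, hx, hxe⟩
  have hrepG : ∀ z : N, z ∈ T → ∃ x, x ∈ Gsub 1 ∧ π x = z := by
    intro z hz
    have h1 := hTleG (htors z hz (-(1 - k₀)))
    have h2 := hshiftG (1 - k₀) k₀ _ h1
    have h3 : (-(1 - k₀)) = -(1-k₀) := rfl
    rw [show (-(1 - k₀)) = -(1 - k₀) from rfl] at h1
    have h5 := hcollapse (-(1 - k₀)) z
    rw [neg_neg] at h5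
    rw [h5] at h2
    have h4 : k₀ + (1 - k₀) = 1 := by omega
    rw [h4] at h2
    obtain ⟨x, hx, hxe⟩ := h2
    exact ⟨x, hx, hxe⟩
  -- the semilinear map from the row space of B
  haveI hασ : RingHomSurjective (α.toRingHom) := ⟨α.surjective⟩
  set hsl : (Fin m → D) →ₛₗ[α.toRingHom] N :=
    { toFun := fun v => π (fun j => (t : R) * ι (v j))
      map_add' := fun v w => by
        show π (fun j => (t : R) * ι ((v + w) j))
            = π (fun j => (t : R) * ι (v j)) + π (fun j => (t : R) * ι (w j))
        have he : (fun j => (t : R) * ι ((v + w) j))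
            = (fun j => (t : R) * ι (v j)) + fun j => (t : R) * ι (w j) := by
          funext j
          simp [mul_add]
        rw [he, map_add]
      map_smul' := fun d v => by
        have he : (fun j => (t : R) * ι ((d • v) j))
            = ι (α d) • fun j => (t : R) * ι (v j) := by
          funext j
          show (t : R) * ι (d * v j) = ι (α d) * ((t : R) * ι (v j))
          rw [map_mul, ← mul_assoc, htw, mul_assoc]
        show π _ = α.toRingHom d • π _
        rw [he, hπRsmul]
        rfl } with hhsl
  -- main claim: every torsion class is the image of an element of the row space of B
  have hmain : ∀ z : N, z ∈ T → ∃ v ∈ VB, hsl v = z := by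
    intro z hz
    obtain ⟨x, hxG, hxπ⟩ := hrepG z hz
    obtain ⟨y, hyF, hyπ⟩ := hrepF z hz
    obtain ⟨u, hu⟩ := hπeq x y (by rw [hxπ, hyπ])
    set c : Fin l → D := fun i => b.repr (u i) 0 with hc
    set uhi : Fin l → R :=
      fun i => b.repr.symm ((b.repr (u i)).filter (fun j : ℤ => 1 ≤ j)) with huhi
    set ulo : Fin l → R :=
      fun i => b.repr.symm ((b.repr (u i)).filter (fun j : ℤ => j ≤ -1)) with hulo
    have hdecomp : u = ulo + (fun i => ι (c i)) + uhi := by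
      funext i
      apply b.repr.injective
      rw [Pi.add_apply, Pi.add_apply, map_add, map_add,
        LinearEquiv.apply_symm_apply, LinearEquiv.apply_symm_apply]
      have hιc : ι (c i) = (c i) • b 0 := by rw [hb0, hsm, mul_one]
      rw [hιc, map_smul, b.repr_self, Finsupp.smul_single, smul_eq_mul, mul_one]
      ext j
      rw [Finsupp.add_apply, Finsupp.add_apply, Finsupp.filter_apply,
        Finsupp.filter_apply, Finsupp.single_apply]
      rcases lt_trichotomy j 0 with hj | hj | hj
      · rw [if_pos (by omega), if_neg (by omega), if_neg (by omega)]
        simp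
      · subst hj
        rw [if_neg (by omega), if_pos rfl, if_neg (by omega)]
        simp [hc]
      · rw [if_neg (by omega), if_neg (by omega), if_pos (by omega)]
        simp
    have hhiRge : ∀ i, uhi i ∈ Rge 1 := by
      intro i
      refine b.mem_span_image.mpr ?_
      rw [huhi, LinearEquiv.apply_symm_apply]
      intro j' hj'
      have h6 := Finset.mem_coe.mp hj'
      rw [Finsupp.support_filter, Finset.mem_filter] at h6
      exact h6.2
    have hloRle : ∀ i, ulo i ∈ Rle (-1) := by
      intro i
      refine b.mem_span_image.mpr ?_
      rw [hulo, LinearEquiv.apply_symm_apply]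
      intro j' hj'
      have h6 := Finset.mem_coe.mp hj'
      rw [Finsupp.support_filter, Finset.mem_filter] at h6
      exact h6.2
    set v : Fin m → D := fun j => ∑ i, α.symm (c i) * B i j with hv
    have hvVB : v ∈ VB := by
      have he : v = ∑ i, α.symm (c i) • B i := by
        funext j
        rw [Finset.sum_apply]
        rfl
      rw [he, hVB]
      exact Submodule.sum_mem _ fun i _ =>
        Submodule.smul_mem _ _ (Submodule.subset_span ⟨i, rfl⟩)
    set tv : Fin m → R := fun j => (t : R) * ι (v j) with htv
    set w0 : Fin m → R := fun j => ι (∑ i, c i * A i j) with hw0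
    have hfc : f (fun i => ι (c i)) = w0 + tv := by
      funext j
      rw [hf]
      have he : ∀ i, ι (c i) * (ι (A i j) + (t : R) * ι (B i j))
          = ι (c i * A i j) + (t : R) * ι (α.symm (c i) * B i j) := by
        intro i
        rw [mul_add, ← map_mul]
        congr 1
        have hcm : ι (c i) * (t : R) = (t : R) * ι (α.symm (c i)) := by
          have := htw (α.symm (c i))
          rw [α.apply_symm_apply] at this
          exact this.symm
        rw [← mul_assoc, hcm, mul_assoc, ← map_mul]
      rw [Finset.sum_congr rfl fun i _ => he i, Finset.sum_add_distrib,
        ← Finset.mul_sum, ← map_sum, ← map_sum]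
      rfl
    have hfhi : f uhi ∈ Gsub 1 := by
      refine (hGmem _ _).mpr fun j => ?_
      rw [hf]
      exact Submodule.sum_mem _ fun i _ => hRge_row _ _ (hhiRge i)
    have hflo : f ulo ∈ Fsub 0 := by
      refine (hFmem _ _).mpr fun j => ?_
      rw [hf]
      exact Submodule.sum_mem _ fun i _ => hRle_row _ _ (hloRle i)
    have key : x - f uhi - tv = y + (f ulo + w0) := by
      have h5 : x - y = f ulo + (w0 + tv) + f uhi := by
        rw [← hu, hdecomp, map_add, map_add, hfc]
      have h6 : x = f ulo + (w0 + tv) + f uhi + y := sub_eq_iff_eq_add.mp h5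
      rw [h6]
      abel
    have htvG : tv ∈ Gsub 1 := by
      refine (hGmem _ _).mpr fun j => ?_
      have he : tv j = (α (v j)) • b 1 := by
        show (t : R) * ι (v j) = _
        rw [htw, hsm, hb, zpow_one]
      rw [he]
      exact Submodule.smul_mem _ _ (hbmemge le_rfl)
    have hw0F : w0 ∈ Fsub 0 := by
      refine (hFmem _ _).mpr fun j => ?_
      have he : w0 j = (∑ i, c i * A i j) • b 0 := by
        show ι (∑ i, c i * A i j) = _
        rw [hb0, hsm, mul_one]
      rw [he]
      exact Submodule.smul_mem _ _ (hbmemle le_rfl)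
    have hz1 : x - f uhi - tv ∈ Gsub 1 :=
      Submodule.sub_mem _ (Submodule.sub_mem _ hxG hfhi) htvG
    have hz2 : x - f uhi - tv ∈ Fsub 0 := by
      rw [key]
      exact Submodule.add_mem _ hyF (Submodule.add_mem _ hflo hw0F)
    have hzero : x - f uhi - tv = 0 := by
      funext j
      have h1 : (x - f uhi - tv) j ∈ Rge 1 := (hGmem _ _).mp hz1 j
      have h2 : (x - f uhi - tv) j ∈ Rle 0 := (hFmem _ _).mp hz2 j
      have hsupp1 := b.mem_span_image.mp h1
      have hsupp2 := b.mem_span_image.mp h2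
      have hempty : (b.repr ((x - f uhi - tv) j)).support = ∅ := by
        refine Finset.eq_empty_iff_forall_notMem.mpr fun j' hj' => ?_
        have hle := hsupp2 (Finset.mem_coe.mpr hj')
        have hge := hsupp1 (Finset.mem_coe.mpr hj')
        simp only [Set.mem_setOf_eq] at hle hge
        omega
      have : b.repr ((x - f uhi - tv) j) = 0 := Finsupp.support_eq_empty.mp hempty
      have h0 : (x - f uhi - tv) j = 0 := by
        have h0' : b.repr ((x - f uhi - tv) j) = b.repr 0 := by rw [this, map_zero]
        exact b.repr.injective h0'
      simpa using h0
    have hxeq : x = f uhi + tv := by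
      rw [sub_sub] at hzero
      exact sub_eq_zero.mp hzero
    refine ⟨v, hvVB, ?_⟩
    have hrfl : hsl v = π tv := rfl
    rw [hrfl, ← hxπ, hxeq, map_add, hπf, zero_add]
  -- conclude via finrank estimates
  have hTQ : T ≤ Submodule.map hsl VB := by
    intro z hz
    obtain ⟨v, hv, he⟩ := hmain z hz
    exact ⟨v, hv, he⟩
  haveI hVBfd : FiniteDimensional D ↥VB := inferInstance
  set r0 := Module.finrank D ↥VB with hr0
  set CB := Module.finBasis D ↥VB with hCB
  have hVBspan : VB = Submodule.span D (Set.range fun i : Fin r0 => (CB i : Fin m → D)) := by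
    conv_lhs => rw [← Submodule.map_subtype_top VB, ← CB.span_eq, Submodule.map_span]
    congr 1
    rw [← Set.range_comp]
    rfl
  have hQspan : Submodule.map hsl VB
      = Submodule.span D (Set.range fun i : Fin r0 => hsl (CB i : Fin m → D)) := by
    conv_lhs => rw [hVBspan, Submodule.map_span]
    congr 1
    rw [← Set.range_comp]
    rfl
  have hTQ' : T ≤ Submodule.span D (Set.range fun i : Fin r0 => hsl (CB i : Fin m → D)) := by
    rw [← hQspan]
    exact hTQ
  haveI hQfd : FiniteDimensional D
      ↥(Submodule.span D (Set.range fun i : Fin r0 => hsl (CB i : Fin m → D))) :=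
    FiniteDimensional.span_of_finite D (Set.finite_range _)
  have h1 : Module.finrank D ↥T ≤ Module.finrank D
      ↥(Submodule.span D (Set.range fun i : Fin r0 => hsl (CB i : Fin m → D))) :=
    Submodule.finrank_mono hTQ'
  have h2 : Module.finrank D
      ↥(Submodule.span D (Set.range fun i : Fin r0 => hsl (CB i : Fin m → D))) ≤ r0 := by
    simpa [Set.finrank] using
      finrank_range_le_card (fun i : Fin r0 => hsl (CB i : Fin m → D))
  exact le_trans h1 h2
end
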